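/- Let bx₁ (state S₁, between A₁ and B₁) and bx₂ (state S₂, between A₂ and B₂) be transparent well-behaved bx over the same lawful monad m. Define the retentive sum bx on state Bool × S₁ × S₂ between A₁ ⊕ A₂ and B₁ ⊕ B₂ by: getL := gets (fun (b, s₁, s₂) => if b then Sum.inl (readL₁ s₁) else Sum.inr (readL₂ s₂)); setL (Sum.inl a₁) := do let (b, s₁, s₂) ← get; let (_, s₁') ← monadLift (setL₁ a₁ s₁); set (true, s₁', s₂); setL (Sum.inr a₂) := do let (b, s₁, s₂) ← get; let (_, s₂') ← monadLift (setL₂ a₂ s₂); set (false, s₁, s₂'); and dually getR := gets (fun (b, s₁, s₂) => if b then Sum.inl (readR₁ s₁) else Sum.inr (readR₂ s₂)), with setR defined from setR₁ and setR₂ in the same way. Then the sum bx is transparent well-behaved: it satisfies (S_LG_L) (do setL x; getL) = (do setL x; pure x) for all x : A₁ ⊕ A₂; (G_LS_L) (do let x ← getL; setL x) = pure ⟨⟩; and the dual laws (S_RG_R) and (G_RS_R). -/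

import Mathlib

universe u v

def getsS {m : Type u → Type v} [Monad m] {σ α : Type u} (f : σ → α) : StateT σ m α := do
  let s ← get
  pure (f s)

/-- A transparent bidirectional transformation over the monad `m`,
with state space `S`, between `A` and `B`. -/
structure TBX (m : Type u → Type v) (S A B : Type u) where
  readL : S → A
  readR : S → B
  setL : A → StateT S m PUnit
  setR : B → StateT S m PUnit

/-- Well-behavedness of a transparent bx: the laws (S_LG_L), (G_LS_L), (S_RG_R), (G_RS_R).
(The get–get laws hold automatically since the gets are `T`-pure queries.) -/
structure TBX.WellBehaved {m : Type u → Type v} [Monad m] {S A B : Type u}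
    (bx : TBX m S A B) : Prop where
  slgl : ∀ a : A, (do bx.setL a; getsS (m := m) bx.readL) = (do bx.setL a; pure a)
  glsl : (do let a ← getsS (m := m) bx.readL; bx.setL a) = (pure PUnit.unit : StateT S m PUnit)
  srgr : ∀ b : B, (do bx.setR b; getsS (m := m) bx.readR) = (do bx.setR b; pure b)
  grsr : (do let b ← getsS (m := m) bx.readR; bx.setR b) = (pure PUnit.unit : StateT S m PUnit)

/-- The retentive sum of two transparent bx. -/
def TBX.sum {m : Type u → Type v} [Monad m] {S₁ S₂ A₁ B₁ A₂ B₂ : Type u}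
    (bx₁ : TBX m S₁ A₁ B₁) (bx₂ : TBX m S₂ A₂ B₂) :
    TBX m (Bool × S₁ × S₂) (A₁ ⊕ A₂) (B₁ ⊕ B₂) where
  readL := fun s => if s.1 then Sum.inl (bx₁.readL s.2.1) else Sum.inr (bx₂.readL s.2.2)
  readR := fun s => if s.1 then Sum.inl (bx₁.readR s.2.1) else Sum.inr (bx₂.readR s.2.2)
  setL := fun x =>
    match x with
    | Sum.inl a₁ => do
        let (_b, s₁, s₂) ← get
        let (_, s₁') ← monadLift ((bx₁.setL a₁).run s₁)
        set ((true, s₁', s₂) : Bool × S₁ × S₂)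
    | Sum.inr a₂ => do
        let (_b, s₁, s₂) ← get
        let (_, s₂') ← monadLift ((bx₂.setL a₂).run s₂)
        set ((false, s₁, s₂') : Bool × S₁ × S₂)
  setR := fun x =>
    match x with
    | Sum.inl b₁ => do
        let (_b, s₁, s₂) ← get
        let (_, s₁') ← monadLift ((bx₁.setR b₁).run s₁)
        set ((true, s₁', s₂) : Bool × S₁ × S₂)
    | Sum.inr b₂ => do
        let (_b, s₁, s₂) ← get
        let (_, s₂') ← monadLift ((bx₂.setR b₂).run s₂)
        set ((false, s₁, s₂') : Bool × S₁ × S₂)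

/-!
Everything is checked pointwise on a state `(b, s₁, s₂)`. Setting a value of summand `i` runs
`set_i` on the component `s_i`, leaves the other component alone and moves the tag to `i`, so a
subsequent read is the read of `bx_i` and (S_G) is inherited from `bx_i`. Reading and writing back
the current view writes to the summand the tag already points at, so the tag is unchanged and
(G_S) is inherited from that summand. The left and right operations of the sum are both
instances of `sumRead`/`sumSet`, so each pair of laws is proved once.
-/

namespace TBX

section Laws

variable {m : Type u → Type v} [Monad m] {S A : Type u}

def SetGet (read : S → A) (set : A → StateT S m PUnit) : Prop :=
  ∀ a : A, (do set a; getsS (m := m) read) = (do set a; pure a)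

def GetSet (read : S → A) (set : A → StateT S m PUnit) : Prop :=
  (do let a ← getsS (m := m) read; set a) = (pure PUnit.unit : StateT S m PUnit)

variable [LawfulMonad m]

@[simp]
theorem run_getsS (f : S → A) (s : S) : (getsS (m := m) f).run s = pure (f s, s) := by
  simp [getsS]

theorem setGet_iff (read : S → A) (set : A → StateT S m PUnit) :
    SetGet read set ↔ ∀ a s,
      (fun p => (read p.2, p.2)) <$> (set a).run s = (fun p => (a, p.2)) <$> (set a).run s := by
  simp only [SetGet, StateT.ext_iff, StateT.run_bind, run_getsS, StateT.run_pure,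
    map_eq_bind_pure_comp, Function.comp_def]

theorem getSet_iff (read : S → A) (set : A → StateT S m PUnit) :
    GetSet read set ↔ ∀ s, (set (read s)).run s = pure (PUnit.unit, s) := by
  simp [GetSet, StateT.ext_iff]

end Laws

section Sum

variable {m : Type u → Type v} [Monad m] {S₁ S₂ A₁ A₂ : Type u}

def sumRead (read₁ : S₁ → A₁) (read₂ : S₂ → A₂) (s : Bool × S₁ × S₂) : A₁ ⊕ A₂ :=
  if s.1 then Sum.inl (read₁ s.2.1) else Sum.inr (read₂ s.2.2)

def sumSet (set₁ : A₁ → StateT S₁ m PUnit) (set₂ : A₂ → StateT S₂ m PUnit) :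
    A₁ ⊕ A₂ → StateT (Bool × S₁ × S₂) m PUnit
  | Sum.inl a₁ => do
      let (_b, s₁, s₂) ← get
      let (_, s₁') ← monadLift ((set₁ a₁).run s₁)
      set ((true, s₁', s₂) : Bool × S₁ × S₂)
  | Sum.inr a₂ => do
      let (_b, s₁, s₂) ← get
      let (_, s₂') ← monadLift ((set₂ a₂).run s₂)
      set ((false, s₁, s₂') : Bool × S₁ × S₂)

variable [LawfulMonad m] (set₁ : A₁ → StateT S₁ m PUnit) (set₂ : A₂ → StateT S₂ m PUnit)

@[simp]
theorem run_sumSet_inl (a₁ : A₁) (b : Bool) (s₁ : S₁) (s₂ : S₂) :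
    (sumSet set₁ set₂ (Sum.inl a₁)).run (b, s₁, s₂) =
      (fun p => (PUnit.unit, (true, p.2, s₂))) <$> (set₁ a₁).run s₁ := by
  simp [sumSet]

@[simp]
theorem run_sumSet_inr (a₂ : A₂) (b : Bool) (s₁ : S₁) (s₂ : S₂) :
    (sumSet set₁ set₂ (Sum.inr a₂)).run (b, s₁, s₂) =
      (fun p => (PUnit.unit, (false, s₁, p.2))) <$> (set₂ a₂).run s₂ := by
  simp [sumSet]

variable {set₁ set₂} {read₁ : S₁ → A₁} {read₂ : S₂ → A₂}

theorem SetGet.sum (h₁ : SetGet read₁ set₁) (h₂ : SetGet read₂ set₂) :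
    SetGet (sumRead read₁ read₂) (sumSet set₁ set₂) := by
  rw [setGet_iff] at h₁ h₂ ⊢
  rintro (a₁ | a₂) ⟨b, s₁, s₂⟩
  · simpa [sumRead, Functor.map_map] using
      congrArg (Functor.map fun q => ((Sum.inl q.1 : A₁ ⊕ A₂), (true, q.2, s₂))) (h₁ a₁ s₁)
  · simpa [sumRead, Functor.map_map] using
      congrArg (Functor.map fun q => ((Sum.inr q.1 : A₁ ⊕ A₂), (false, s₁, q.2))) (h₂ a₂ s₂)

theorem GetSet.sum (h₁ : GetSet read₁ set₁) (h₂ : GetSet read₂ set₂) :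
    GetSet (sumRead read₁ read₂) (sumSet set₁ set₂) := by
  rw [getSet_iff] at h₁ h₂ ⊢
  rintro ⟨_ | _, s₁, s₂⟩ <;> simp [sumRead, h₁, h₂]

end Sum

end TBX

theorem sum_wellBehaved
    {m : Type u → Type v} [Monad m] [LawfulMonad m] {S₁ S₂ A₁ B₁ A₂ B₂ : Type u}
    (bx₁ : TBX m S₁ A₁ B₁) (bx₂ : TBX m S₂ A₂ B₂)
    (h₁ : bx₁.WellBehaved) (h₂ : bx₂.WellBehaved) :
    (bx₁.sum bx₂).WellBehaved :=
  ⟨TBX.SetGet.sum h₁.slgl h₂.slgl, TBX.GetSet.sum h₁.glsl h₂.glsl,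
    TBX.SetGet.sum h₁.srgr h₂.srgr, TBX.GetSet.sum h₁.grsr h₂.grsr⟩
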